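/- For every q₂ ∈ ℝ³ with q₂ ≠ 0, ∫_{ℝ³} |q₁ − q₂|·exp(−|q₁|²) dq₁ = (π^{3/2}/(2|q₂|))·erf(|q₂|)·(1 + 2|q₂|²) + π·exp(−|q₂|²). -/

import Mathlib

open MeasureTheory Real Filter Set

/-- `ℝ³` as a Euclidean space. -/
noncomputable abbrev R3 := EuclideanSpace ℝ (Fin 3)

/-- The error function `erf(x) = (2/√π) ∫₀ˣ exp(−t²) dt`. -/
noncomputable def erf (x : ℝ) : ℝ :=
  (2 / Real.sqrt Real.pi) * ∫ t in (0 : ℝ)..x, Real.exp (-t ^ 2)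


lemma gauss_cont : Continuous (fun t : ℝ => Real.exp (-t ^ 2)) := by
  continuity

lemma gauss_int : MeasureTheory.Integrable (fun t : ℝ => Real.exp (-t ^ 2)) := by
  simpa using integrable_exp_neg_mul_sq (one_pos)

lemma gauss_Ioi : ∫ t in Ioi (0:ℝ), Real.exp (-t ^ 2) = Real.sqrt Real.pi / 2 := by
  simpa using integral_gaussian_Ioi 1

lemma erf_hasDerivAt (x : ℝ) :
    HasDerivAt erf (2 / Real.sqrt Real.pi * Real.exp (-x ^ 2)) x := by
  have h : HasDerivAt (fun y : ℝ => ∫ t in (0:ℝ)..y, Real.exp (-t ^ 2))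
      (Real.exp (-x ^ 2)) x :=
    intervalIntegral.integral_hasDerivAt_right (gauss_cont.intervalIntegrable _ _)
      (gauss_cont.stronglyMeasurableAtFilter _ _) gauss_cont.continuousAt
  exact h.const_mul (2 / Real.sqrt Real.pi)

lemma erf_neg (x : ℝ) : erf (-x) = - erf x := by
  unfold erf
  rw [← mul_neg]
  congr 1
  have h : (∫ t in (0:ℝ)..x, Real.exp (-(-t) ^ 2)) = ∫ t in (-x)..(-(0:ℝ)), Real.exp (-t ^ 2) :=
    intervalIntegral.integral_comp_neg (fun t : ℝ => Real.exp (-t ^ 2))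
  simp only [neg_neg, neg_zero] at h
  have heven : (∫ t in (0:ℝ)..x, Real.exp (-(-t) ^ 2)) = ∫ t in (0:ℝ)..x, Real.exp (-t ^ 2) := by
    apply intervalIntegral.integral_congr; intro t _; ring_nf
  rw [heven] at h
  rw [h]
  exact intervalIntegral.integral_symm _ _

lemma tendsto_erf_atTop : Tendsto erf atTop (nhds 1) := by
  have h := intervalIntegral_tendsto_integral_Ioi 0 gauss_int.integrableOn tendsto_id
  rw [gauss_Ioi] at h
  have h2 : (2 / Real.sqrt Real.pi) * (Real.sqrt Real.pi / 2) = 1 := by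
    have hpi : Real.sqrt Real.pi ≠ 0 := by positivity
    field_simp
  rw [← h2]
  exact h.const_mul _

lemma tendsto_erf_atBot : Tendsto erf atBot (nhds (-1)) := by
  have h := (tendsto_erf_atTop.comp tendsto_neg_atBot_atTop).neg
  refine h.congr (fun x => ?_)
  simp [Function.comp, erf_neg]

lemma erf_nonneg {t : ℝ} (ht : 0 ≤ t) : 0 ≤ erf t := by
  apply mul_nonneg (by positivity)
  exact intervalIntegral.integral_nonneg ht (fun u _ => (Real.exp_pos _).le)

lemma erfc_eq {t : ℝ} (ht : 0 ≤ t) :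
    1 - erf t = (2 / Real.sqrt Real.pi) * ∫ s in Ioi t, Real.exp (-s ^ 2) := by
  have hsplit : (∫ s in Ioc 0 t, Real.exp (-s ^ 2)) + ∫ s in Ioi t, Real.exp (-s ^ 2)
      = ∫ s in Ioi (0:ℝ), Real.exp (-s ^ 2) := by
    rw [← setIntegral_union (Ioc_disjoint_Ioi le_rfl) measurableSet_Ioi
      gauss_int.integrableOn gauss_int.integrableOn, Ioc_union_Ioi_eq_Ioi ht]
  rw [gauss_Ioi] at hsplit
  have h0 : erf t = (2 / Real.sqrt Real.pi) * ∫ s in Ioc 0 t, Real.exp (-s ^ 2) := by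
    rw [erf, intervalIntegral.integral_of_le ht]
  have hpi : Real.sqrt Real.pi ≠ 0 := by positivity
  have hgoal : (2 / Real.sqrt Real.pi) *
      ((∫ s in Ioc 0 t, Real.exp (-s ^ 2)) + ∫ s in Ioi t, Real.exp (-s ^ 2)) = 1 := by
    rw [hsplit]
    have hpi : Real.sqrt Real.pi ≠ 0 := by positivity
    field_simp
  rw [h0]
  rw [mul_add] at hgoal
  linarith

lemma erf_le_one (t : ℝ) : erf t ≤ 1 := by
  rcases le_or_gt 0 t with ht | ht
  · have h := erfc_eq ht
    have : 0 ≤ 1 - erf t := by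
      rw [h]
      apply mul_nonneg (by positivity)
      exact setIntegral_nonneg measurableSet_Ioi (fun u _ => (Real.exp_pos _).le)
    linarith
  · have : erf t = - erf (-t) := by rw [← erf_neg, neg_neg]
    rw [this]
    have := erf_nonneg (le_of_lt (neg_pos.mpr ht))
    linarith

lemma erfc_le {t : ℝ} (ht : 0 ≤ t) : 1 - erf t ≤ Real.exp (-t ^ 2) := by
  rw [erfc_eq ht]
  have hshift : (∫ x in Ioi (0:ℝ), Real.exp (-(x + t) ^ 2)) = ∫ s in Ioi t, Real.exp (-s ^ 2) := by
    have := (measurePreserving_add_right volume t).setIntegral_preimage_emb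
      (measurableEmbedding_addRight t) (fun s => Real.exp (-s ^ 2)) (Ioi t)
    simpa using this
  rw [← hshift]
  have hb : (∫ x in Ioi (0:ℝ), Real.exp (-(x + t) ^ 2))
      ≤ ∫ x in Ioi (0:ℝ), Real.exp (-t ^ 2) * Real.exp (-x ^ 2) := by
    apply setIntegral_mono_on
    · exact (gauss_int.comp_add_right t).integrableOn
    · exact (gauss_int.const_mul _).integrableOn
    · exact measurableSet_Ioi
    · intro x hx
      rw [← Real.exp_add]
      apply Real.exp_le_exp.mpr
      nlinarith [le_of_lt (mem_Ioi.mp hx)]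
  calc (2 / Real.sqrt Real.pi) * ∫ x in Ioi (0:ℝ), Real.exp (-(x + t) ^ 2)
      ≤ (2 / Real.sqrt Real.pi) * ∫ x in Ioi (0:ℝ), Real.exp (-t ^ 2) * Real.exp (-x ^ 2) := by
        apply mul_le_mul_of_nonneg_left hb (by positivity)
    _ = Real.exp (-t ^ 2) := by
        rw [integral_const_mul, gauss_Ioi]
        have hpi : Real.sqrt Real.pi ≠ 0 := by positivity
        field_simp

lemma differentiable_erf : Differentiable ℝ erf :=
  fun x => (erf_hasDerivAt x).differentiableAt

lemma continuous_erf : Continuous erf := differentiable_erf.continuous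

lemma self_le_exp_half_sq (r : ℝ) : r ≤ Real.exp ((1/2) * r ^ 2) := by
  have h := Real.add_one_le_exp ((1/2) * r ^ 2)
  nlinarith [sq_nonneg (r - 1)]

lemma sq_le_exp_half_sq (r : ℝ) : r ^ 2 ≤ 2 * Real.exp ((1/2) * r ^ 2) := by
  have h := Real.add_one_le_exp ((1/2) * r ^ 2)
  nlinarith [Real.exp_pos ((1/2) * r ^ 2)]

lemma gauss_half_int : MeasureTheory.Integrable (fun x : ℝ => Real.exp (-((1:ℝ)/2) * x ^ 2)) :=
  integrable_exp_neg_mul_sq (by norm_num)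

lemma radial_integrand_bound {c r : ℝ} (hc : 0 ≤ c) (hr : 0 ≤ r) :
    r * Real.sqrt (c ^ 2 + r ^ 2) * Real.exp (-r ^ 2) ≤
      (c + 2) * Real.exp (-((1:ℝ)/2) * r ^ 2) := by
  have hs : Real.sqrt (c ^ 2 + r ^ 2) ≤ c + r := by
    rw [show c ^ 2 + r ^ 2 = (c+r)^2 - 2*c*r by ring]
    calc Real.sqrt ((c+r)^2 - 2*c*r) ≤ Real.sqrt ((c+r)^2) := by
          apply Real.sqrt_le_sqrt; nlinarith
      _ = c + r := Real.sqrt_sq (by positivity)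
  have h1 : r * Real.exp (-r ^ 2) ≤ Real.exp (-((1:ℝ)/2) * r ^ 2) := by
    have := self_le_exp_half_sq r
    have he : Real.exp (-r^2) = Real.exp ((1/2)*r^2) * Real.exp (-(1/2)*r^2) * Real.exp (-r^2) /
        (Real.exp ((1/2)*r^2) * Real.exp (-(1/2)*r^2)) := by
      field_simp
    calc r * Real.exp (-r^2) ≤ Real.exp ((1/2)*r^2) * Real.exp (-r^2) := by
          apply mul_le_mul_of_nonneg_right this (Real.exp_pos _).le
      _ = Real.exp (-(1/2)*r^2) := by rw [← Real.exp_add]; ring_nf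
  have h2 : r ^ 2 * Real.exp (-r ^ 2) ≤ 2 * Real.exp (-((1:ℝ)/2) * r ^ 2) := by
    have := sq_le_exp_half_sq r
    calc r ^ 2 * Real.exp (-r^2) ≤ 2 * Real.exp ((1/2)*r^2) * Real.exp (-r^2) := by
          apply mul_le_mul_of_nonneg_right this (Real.exp_pos _).le
      _ = 2 * Real.exp (-(1/2)*r^2) := by rw [mul_assoc, ← Real.exp_add]; ring_nf
  calc r * Real.sqrt (c ^ 2 + r ^ 2) * Real.exp (-r ^ 2)
      ≤ r * (c + r) * Real.exp (-r ^ 2) := by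
        apply mul_le_mul_of_nonneg_right _ (Real.exp_pos _).le
        exact mul_le_mul_of_nonneg_left hs hr
    _ = c * (r * Real.exp (-r^2)) + r^2 * Real.exp (-r^2) := by ring
    _ ≤ c * Real.exp (-(1/2)*r^2) + 2 * Real.exp (-(1/2)*r^2) := by
        apply add_le_add _ h2
        exact mul_le_mul_of_nonneg_left h1 hc
    _ = (c + 2) * Real.exp (-((1:ℝ)/2) * r ^ 2) := by ring

lemma radial_integrableOn {c : ℝ} (hc : 0 ≤ c) :
    IntegrableOn (fun r : ℝ => r * Real.sqrt (c ^ 2 + r ^ 2) * Real.exp (-r ^ 2)) (Ioi 0) := by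
  apply Integrable.mono' ((gauss_half_int.const_mul (c+2)).restrict)
  · apply Continuous.aestronglyMeasurable
    continuity
  · rw [ae_restrict_iff' measurableSet_Ioi]
    apply ae_of_all
    intro r hr
    have hr' := (mem_Ioi.mp hr).le
    rw [Real.norm_eq_abs, abs_of_nonneg (by positivity)]
    exact radial_integrand_bound hc hr'

lemma tendsto_exp_neg_sq : Tendsto (fun r : ℝ => Real.exp (-r ^ 2)) atTop (nhds 0) := by
  have hsq : Tendsto (fun r : ℝ => r ^ 2) atTop atTop := tendsto_pow_atTop two_ne_zero
  exact Real.tendsto_exp_atBot.comp (tendsto_neg_atTop_atBot.comp hsq)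

lemma tendsto_exp_neg_half_sq :
    Tendsto (fun r : ℝ => Real.exp (-((1:ℝ)/2) * r ^ 2)) atTop (nhds 0) := by
  have hsq : Tendsto (fun r : ℝ => r ^ 2) atTop atTop := tendsto_pow_atTop two_ne_zero
  have h2 : Tendsto (fun r : ℝ => ((1:ℝ)/2) * r ^ 2) atTop atTop := by
    exact Tendsto.const_mul_atTop (by norm_num) hsq
  have := Real.tendsto_exp_atBot.comp (tendsto_neg_atTop_atBot.comp h2)
  refine this.congr (fun r => ?_)
  simp [Function.comp]

lemma sqrt_le_add {c r : ℝ} (hc : 0 ≤ c) (hr : 0 ≤ r) :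
    Real.sqrt (c ^ 2 + r ^ 2) ≤ c + r := by
  rw [show c ^ 2 + r ^ 2 = (c+r)^2 - 2*c*r by ring]
  calc Real.sqrt ((c+r)^2 - 2*c*r) ≤ Real.sqrt ((c+r)^2) := by
        apply Real.sqrt_le_sqrt; nlinarith
    _ = c + r := Real.sqrt_sq (by positivity)

lemma radial_integral {c : ℝ} (hc : 0 ≤ c) :
    ∫ r in Ioi (0:ℝ), r * Real.sqrt (c ^ 2 + r ^ 2) * Real.exp (-r ^ 2)
      = c / 2 + Real.sqrt Real.pi / 4 * Real.exp (c ^ 2) * (1 - erf c) := by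
  set s : ℝ → ℝ := fun r => Real.sqrt (c ^ 2 + r ^ 2) with hs_def
  set G : ℝ → ℝ := fun r =>
    -(1/2) * s r * Real.exp (-r ^ 2) + Real.sqrt Real.pi / 4 * Real.exp (c ^ 2) * erf (s r)
    with hG_def
  have hs_cont : Continuous s := by
    apply Real.continuous_sqrt.comp; continuity
  have hGcont : Continuous G := by
    apply Continuous.add
    · exact (continuous_const.mul hs_cont).mul (by continuity)
    · exact continuous_const.mul (continuous_erf.comp hs_cont)
  have hderiv : ∀ r ∈ Ioi (0:ℝ), HasDerivAt G (r * s r * Real.exp (-r ^ 2)) r := by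
    intro r hr
    have hr0 : 0 < r := mem_Ioi.mp hr
    have hpos : 0 < c ^ 2 + r ^ 2 := by positivity
    have hspos : 0 < s r := Real.sqrt_pos.mpr hpos
    have hinner : HasDerivAt (fun x : ℝ => c ^ 2 + x ^ 2) (2 * r) r := by
      simpa using (hasDerivAt_pow 2 r).const_add (c ^ 2)
    have hs : HasDerivAt s (1 / (2 * s r) * (2 * r)) r :=
      (Real.hasDerivAt_sqrt (ne_of_gt hpos)).comp r hinner
    have hexp : HasDerivAt (fun x : ℝ => Real.exp (-x ^ 2)) (Real.exp (-r ^ 2) * -(2 * r)) r := by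
      have := ((hasDerivAt_pow 2 r).neg).exp
      simpa using this
    have herf : HasDerivAt (fun x : ℝ => erf (s x))
        ((2 / Real.sqrt Real.pi * Real.exp (-(s r) ^ 2)) * (1 / (2 * s r) * (2 * r))) r :=
      (erf_hasDerivAt (s r)).comp r hs
    have hG : HasDerivAt G
        ((-(1/2) * (1 / (2 * s r) * (2 * r)) * Real.exp (-r ^ 2)
          + -(1/2) * s r * (Real.exp (-r ^ 2) * -(2 * r)))
         + Real.sqrt Real.pi / 4 * Real.exp (c ^ 2) *
            ((2 / Real.sqrt Real.pi * Real.exp (-(s r) ^ 2)) * (1 / (2 * s r) * (2 * r)))) r := by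
      exact (((hs.const_mul (-(1/2))).mul hexp).add (herf.const_mul _))
    have hs2 : (s r) ^ 2 = c ^ 2 + r ^ 2 := Real.sq_sqrt hpos.le
    have hexps : Real.exp (-(s r) ^ 2) = Real.exp (-c ^ 2) * Real.exp (-r ^ 2) := by
      rw [hs2, ← Real.exp_add]; ring_nf
    have hcc : Real.exp (c ^ 2) * Real.exp (-c ^ 2) = 1 := by
      rw [← Real.exp_add]; simp
    have hpi : Real.sqrt Real.pi ≠ 0 := by positivity
    have hsne : s r ≠ 0 := ne_of_gt hspos
    have e1 : Real.sqrt Real.pi / 4 * Real.exp (c ^ 2) *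
        ((2 / Real.sqrt Real.pi * Real.exp (-(s r) ^ 2)) * (1 / (2 * s r) * (2 * r)))
        = (Real.exp (c ^ 2) * Real.exp (-c ^ 2)) * (r * Real.exp (-r ^ 2) / (2 * s r)) := by
      rw [hexps]; field_simp; ring
    have hDeq : (-(1/2) * (1 / (2 * s r) * (2 * r)) * Real.exp (-r ^ 2)
          + -(1/2) * s r * (Real.exp (-r ^ 2) * -(2 * r)))
         + Real.sqrt Real.pi / 4 * Real.exp (c ^ 2) *
            ((2 / Real.sqrt Real.pi * Real.exp (-(s r) ^ 2)) * (1 / (2 * s r) * (2 * r)))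
        = r * s r * Real.exp (-r ^ 2) := by
      rw [e1, hcc]
      field_simp
      ring
    exact hDeq ▸ hG
  have hlim : Tendsto G atTop (nhds (Real.sqrt Real.pi / 4 * Real.exp (c ^ 2))) := by
    have t1 : Tendsto (fun r => -(1/2) * s r * Real.exp (-r ^ 2)) atTop (nhds 0) := by
      have habs : Tendsto (fun r => (1/2) * (s r * Real.exp (-r ^ 2))) atTop (nhds 0) := by
        have hb : Tendsto (fun r : ℝ => c * Real.exp (-r ^ 2) +
            Real.exp (-((1:ℝ)/2) * r ^ 2)) atTop (nhds 0) := by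
          simpa using (tendsto_exp_neg_sq.const_mul c).add tendsto_exp_neg_half_sq
        have hsq0 : Tendsto (fun r : ℝ => s r * Real.exp (-r ^ 2)) atTop (nhds 0) := by
          apply squeeze_zero' (Filter.eventually_atTop.mpr ⟨0, fun r hr => by positivity⟩)
            (Filter.eventually_atTop.mpr ⟨0, fun r hr => ?_⟩) hb
          have h1 : s r * Real.exp (-r ^ 2) ≤ (c + r) * Real.exp (-r ^ 2) :=
            mul_le_mul_of_nonneg_right (sqrt_le_add hc hr) (Real.exp_pos _).le
          have h2 : r * Real.exp (-r ^ 2) ≤ Real.exp (-((1:ℝ)/2) * r ^ 2) := by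
            have := self_le_exp_half_sq r
            calc r * Real.exp (-r^2) ≤ Real.exp ((1/2)*r^2) * Real.exp (-r^2) :=
                  mul_le_mul_of_nonneg_right this (Real.exp_pos _).le
              _ = Real.exp (-(1/2)*r^2) := by rw [← Real.exp_add]; ring_nf
          nlinarith [Real.exp_pos (-r^2)]
        simpa using hsq0.const_mul (1/2 : ℝ)
      have := habs.neg
      simp only [neg_zero] at this
      refine this.congr (fun r => by ring)
    have t2 : Tendsto (fun r => Real.sqrt Real.pi / 4 * Real.exp (c ^ 2) * erf (s r)) atTop
        (nhds (Real.sqrt Real.pi / 4 * Real.exp (c ^ 2))) := by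
      have hsTop : Tendsto s atTop atTop := by
        apply tendsto_atTop_mono _ tendsto_id
        intro r
        calc (r : ℝ) ≤ |r| := le_abs_self r
          _ = Real.sqrt (r ^ 2) := (Real.sqrt_sq_eq_abs r).symm
          _ ≤ s r := Real.sqrt_le_sqrt (by nlinarith)
      have := (tendsto_erf_atTop.comp hsTop).const_mul (Real.sqrt Real.pi / 4 * Real.exp (c ^ 2))
      simpa [mul_comm] using this
    have h := t1.add t2
    rw [zero_add] at h
    exact h
  have key := integral_Ioi_of_hasDerivAt_of_tendsto hGcont.continuousWithinAt hderiv
    (radial_integrableOn hc) hlim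
  rw [key, hG_def, hs_def]
  have h0 : Real.sqrt (c ^ 2 + 0 ^ 2) = c := by
    simp [Real.sqrt_sq hc]
  simp only [h0]
  simp [Real.exp_zero]
  ring

lemma planar_integral {c : ℝ} (hc : 0 ≤ c) :
    ∫ p : ℝ × ℝ, Real.sqrt (c ^ 2 + (p.1 ^ 2 + p.2 ^ 2)) * Real.exp (-(p.1 ^ 2 + p.2 ^ 2))
      = Real.pi * c + Real.pi * Real.sqrt Real.pi / 2 * Real.exp (c ^ 2) * (1 - erf c) := by
  rw [← integral_comp_polarCoord_symm]
  have hval : ∀ p : ℝ × ℝ,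
      p.1 • (Real.sqrt (c ^ 2 + ((polarCoord.symm p).1 ^ 2 + (polarCoord.symm p).2 ^ 2)) *
        Real.exp (-((polarCoord.symm p).1 ^ 2 + (polarCoord.symm p).2 ^ 2)))
      = (p.1 * Real.sqrt (c ^ 2 + p.1 ^ 2) * Real.exp (-p.1 ^ 2)) * (1 : ℝ) := by
    intro p
    have hps : polarCoord.symm p = (p.1 * Real.cos p.2, p.1 * Real.sin p.2) := rfl
    have h : (polarCoord.symm p).1 ^ 2 + (polarCoord.symm p).2 ^ 2 = p.1 ^ 2 := by
      rw [hps]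
      have := Real.sin_sq_add_cos_sq p.2
      simp only
      nlinarith
    rw [h, smul_eq_mul]
    ring
  simp_rw [hval]
  have htarget : polarCoord.target = Ioi (0:ℝ) ×ˢ Ioo (-Real.pi) Real.pi := rfl
  rw [htarget, Measure.volume_eq_prod, ← Measure.prod_restrict]
  rw [MeasureTheory.integral_prod_mul
    (fun r : ℝ => r * Real.sqrt (c ^ 2 + r ^ 2) * Real.exp (-r ^ 2)) (fun _ : ℝ => (1:ℝ))]
  rw [radial_integral hc]
  rw [MeasureTheory.integral_const]
  simp only [smul_eq_mul, mul_one]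
  rw [measureReal_def, Measure.restrict_apply_univ, Real.volume_Ioo]
  rw [ENNReal.toReal_ofReal (by linarith [Real.pi_pos] : (0:ℝ) ≤ Real.pi - -Real.pi)]
  ring

lemma erf_zero : erf 0 = 0 := by simp [erf]

lemma tendsto_exp_neg_sq_atBot : Tendsto (fun x : ℝ => Real.exp (-x ^ 2)) atBot (nhds 0) := by
  have := tendsto_exp_neg_sq.comp tendsto_neg_atBot_atTop
  refine this.congr (fun x => ?_)
  simp [Function.comp]

lemma abs_gauss_int : MeasureTheory.Integrable (fun x : ℝ => |x| * Real.exp (-x ^ 2)) := by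
  have := (integrable_mul_exp_neg_mul_sq one_pos).abs
  refine this.congr (ae_of_all _ (fun x => ?_))
  simp [abs_mul, abs_of_nonneg (Real.exp_nonneg _)]

lemma intA1 (a : ℝ) : MeasureTheory.Integrable (fun x : ℝ => |x - a| * Real.exp (-x ^ 2)) := by
  apply Integrable.mono' (abs_gauss_int.add (gauss_int.const_mul |a|))
  · apply Continuous.aestronglyMeasurable; continuity
  · apply ae_of_all
    intro x
    rw [Real.norm_eq_abs, abs_of_nonneg (by positivity)]
    have h : |x - a| ≤ |x| + |a| := abs_sub _ _
    simp only [Pi.add_apply]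
    nlinarith [Real.exp_pos (-x^2), abs_nonneg x, abs_nonneg a]

lemma partA (a : ℝ) :
    ∫ x : ℝ, |x - a| * Real.exp (-x ^ 2)
      = Real.exp (-a ^ 2) + Real.sqrt Real.pi * a * erf a := by
  have hpi : Real.sqrt Real.pi ≠ 0 := by positivity
  rw [← intervalIntegral.integral_Iic_add_Ioi (intA1 a).integrableOn (intA1 a).integrableOn]
  have hIoi : ∫ x in Ioi a, |x - a| * Real.exp (-x ^ 2)
      = Real.exp (-a ^ 2) / 2 + Real.sqrt Real.pi / 2 * a * erf a
        - Real.sqrt Real.pi / 2 * a := by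
    have hcongr : ∀ x ∈ Ioi a, |x - a| * Real.exp (-x ^ 2) = (x - a) * Real.exp (-x ^ 2) := by
      intro x hx
      rw [abs_of_nonneg (by simp at hx; linarith)]
    rw [setIntegral_congr_fun measurableSet_Ioi hcongr]
    set F : ℝ → ℝ := fun x => -(1/2) * Real.exp (-x ^ 2) - Real.sqrt Real.pi / 2 * a * erf x
      with hF
    have hderiv : ∀ x ∈ Ioi a, HasDerivAt F ((x - a) * Real.exp (-x ^ 2)) x := by
      intro x _
      have hexp : HasDerivAt (fun x : ℝ => Real.exp (-x ^ 2))
          (Real.exp (-x ^ 2) * -(2 * x)) x := by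
        simpa using ((hasDerivAt_pow 2 x).neg).exp
      have h := (hexp.const_mul (-(1/2) : ℝ)).sub
        ((erf_hasDerivAt x).const_mul (Real.sqrt Real.pi / 2 * a))
      refine h.congr_deriv ?_
      field_simp
    have hF_cont : Continuous F := by
      apply Continuous.sub
      · continuity
      · exact continuous_const.mul continuous_erf
    have hlim : Tendsto F atTop (nhds (-(Real.sqrt Real.pi / 2 * a))) := by
      have h := (tendsto_exp_neg_sq.const_mul (-(1/2) : ℝ)).sub
        (tendsto_erf_atTop.const_mul (Real.sqrt Real.pi / 2 * a))
      convert h using 2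
      norm_num
    have hint : IntegrableOn (fun x => (x - a) * Real.exp (-x ^ 2)) (Ioi a) := by
      exact ((intA1 a).integrableOn).congr_fun hcongr measurableSet_Ioi
    rw [integral_Ioi_of_hasDerivAt_of_tendsto hF_cont.continuousWithinAt hderiv hint hlim]
    rw [hF]
    simp only
    ring
  have hIic : ∫ x in Iic a, |x - a| * Real.exp (-x ^ 2)
      = Real.exp (-a ^ 2) / 2 + Real.sqrt Real.pi / 2 * a * erf a
        + Real.sqrt Real.pi / 2 * a := by
    have hcongr : ∀ x ∈ Iic a, |x - a| * Real.exp (-x ^ 2) = (a - x) * Real.exp (-x ^ 2) := by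
      intro x hx
      rw [abs_sub_comm, abs_of_nonneg (by simp at hx; linarith)]
    rw [setIntegral_congr_fun measurableSet_Iic hcongr]
    set F : ℝ → ℝ := fun x => (1/2) * Real.exp (-x ^ 2) + Real.sqrt Real.pi / 2 * a * erf x
      with hF
    have hderiv : ∀ x ∈ Iio a, HasDerivAt F ((a - x) * Real.exp (-x ^ 2)) x := by
      intro x _
      have hexp : HasDerivAt (fun x : ℝ => Real.exp (-x ^ 2))
          (Real.exp (-x ^ 2) * -(2 * x)) x := by
        simpa using ((hasDerivAt_pow 2 x).neg).exp
      have h := (hexp.const_mul ((1/2) : ℝ)).add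
        ((erf_hasDerivAt x).const_mul (Real.sqrt Real.pi / 2 * a))
      refine h.congr_deriv ?_
      field_simp
      ring
    have hF_cont : Continuous F := by
      apply Continuous.add
      · continuity
      · exact continuous_const.mul continuous_erf
    have hlim : Tendsto F atBot (nhds (-(Real.sqrt Real.pi / 2 * a))) := by
      have h := (tendsto_exp_neg_sq_atBot.const_mul ((1/2) : ℝ)).add
        (tendsto_erf_atBot.const_mul (Real.sqrt Real.pi / 2 * a))
      convert h using 2
      norm_num
    have hint : IntegrableOn (fun x => (a - x) * Real.exp (-x ^ 2)) (Iic a) := by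
      exact ((intA1 a).integrableOn).congr_fun hcongr measurableSet_Iic
    rw [integral_Iic_of_hasDerivAt_of_tendsto hF_cont.continuousWithinAt hderiv hint hlim]
    rw [hF]
    simp only
    ring
  rw [hIoi, hIic]
  ring

lemma intB {a : ℝ} :
    MeasureTheory.Integrable (fun x : ℝ => Real.exp (a ^ 2 - 2 * a * x) * (1 - erf |x - a|)) := by
  apply Integrable.mono' gauss_int
  · apply Continuous.aestronglyMeasurable
    apply Continuous.mul (by continuity)
    exact (continuous_const.sub (continuous_erf.comp (by continuity)))
  · apply ae_of_all
    intro x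
    have h1 : 0 ≤ 1 - erf |x - a| := by linarith [erf_le_one |x - a|]
    have h2 : 1 - erf |x - a| ≤ Real.exp (-(x - a) ^ 2) := by
      have := erfc_le (abs_nonneg (x - a))
      rwa [sq_abs] at this
    rw [Real.norm_eq_abs, abs_of_nonneg (by positivity)]
    calc Real.exp (a ^ 2 - 2 * a * x) * (1 - erf |x - a|)
        ≤ Real.exp (a ^ 2 - 2 * a * x) * Real.exp (-(x - a) ^ 2) :=
          mul_le_mul_of_nonneg_left h2 (Real.exp_pos _).le
      _ = Real.exp (-x ^ 2) := by rw [← Real.exp_add]; ring_nf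

lemma partB {a : ℝ} (ha : 0 < a) :
    ∫ x : ℝ, Real.exp (a ^ 2 - 2 * a * x) * (1 - erf |x - a|) = erf a / a := by
  have hane : a ≠ 0 := ne_of_gt ha
  have hpi : Real.sqrt Real.pi ≠ 0 := by positivity
  have hexp_deriv : ∀ x : ℝ, HasDerivAt (fun x : ℝ => Real.exp (a ^ 2 - 2 * a * x))
      (Real.exp (a ^ 2 - 2 * a * x) * -(2 * a)) x := by
    intro x
    have h : HasDerivAt (fun x : ℝ => a ^ 2 - 2 * a * x) (-(2 * a)) x := by
      simpa using ((hasDerivAt_id x).const_mul (2 * a)).const_sub (a ^ 2)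
    exact h.exp
  rw [← intervalIntegral.integral_Iic_add_Ioi (b := a) intB.integrableOn intB.integrableOn]
  have hIoi : ∫ x in Ioi a, Real.exp (a ^ 2 - 2 * a * x) * (1 - erf |x - a|)
      = 1 / (2 * a) * (Real.exp (-a ^ 2) + erf a) - 1 / (2 * a) := by
    have hcongr : ∀ x ∈ Ioi a, Real.exp (a ^ 2 - 2 * a * x) * (1 - erf |x - a|)
        = Real.exp (a ^ 2 - 2 * a * x) * (1 - erf (x - a)) := by
      intro x hx
      rw [abs_of_nonneg (by simp at hx; linarith)]
    rw [setIntegral_congr_fun measurableSet_Ioi hcongr]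
    set W : ℝ → ℝ := fun x =>
      -(1 / (2 * a)) * (Real.exp (a ^ 2 - 2 * a * x) * (1 - erf (x - a)) + erf x) with hW
    have hderiv : ∀ x ∈ Ioi a,
        HasDerivAt W (Real.exp (a ^ 2 - 2 * a * x) * (1 - erf (x - a))) x := by
      intro x _
      have h1 := hexp_deriv x
      have hsub : HasDerivAt (fun x : ℝ => x - a) 1 x := (hasDerivAt_id x).sub_const a
      have herf1 : HasDerivAt (fun x : ℝ => erf (x - a))
          ((2 / Real.sqrt Real.pi * Real.exp (-(x - a) ^ 2)) * 1) x :=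
        (erf_hasDerivAt (x - a)).comp (h₂ := erf) x hsub
      have h2 : HasDerivAt (fun x : ℝ => (1 : ℝ) - erf (x - a))
          (-((2 / Real.sqrt Real.pi * Real.exp (-(x - a) ^ 2)) * 1)) x :=
        herf1.const_sub 1
      have hprod := h1.mul h2
      have hW' := ((hprod.add (erf_hasDerivAt x)).const_mul (-(1 / (2 * a))))
      refine hW'.congr_deriv ?_
      have hcancel : Real.exp (a ^ 2 - 2 * a * x) * Real.exp (-(x - a) ^ 2)
          = Real.exp (-x ^ 2) := by rw [← Real.exp_add]; ring_nf
      rw [← hcancel]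
      field_simp
      nlinarith [hcancel, Real.exp_pos (-x^2), Real.exp_pos (a^2-2*a*x)]
    have hW_cont : Continuous W := by
      apply Continuous.mul continuous_const
      apply Continuous.add _ continuous_erf
      exact (by continuity : Continuous fun x : ℝ => Real.exp (a ^ 2 - 2 * a * x)).mul
        (continuous_const.sub (continuous_erf.comp (by continuity)))
    have hlim : Tendsto W atTop (nhds (-(1 / (2 * a)))) := by
      have hmain : Tendsto (fun x : ℝ => Real.exp (a ^ 2 - 2 * a * x) * (1 - erf (x - a)))
          atTop (nhds 0) := by
        apply squeeze_zero' (Filter.eventually_atTop.mpr ⟨a, fun x hx => ?_⟩)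
          (Filter.eventually_atTop.mpr ⟨a, fun x hx => ?_⟩) tendsto_exp_neg_sq
        · have h1 : erf (x - a) ≤ 1 := erf_le_one _
          exact mul_nonneg (Real.exp_pos _).le (by linarith)
        · have h2 : 1 - erf (x - a) ≤ Real.exp (-(x - a) ^ 2) := erfc_le (by linarith)
          calc Real.exp (a ^ 2 - 2 * a * x) * (1 - erf (x - a))
              ≤ Real.exp (a ^ 2 - 2 * a * x) * Real.exp (-(x - a) ^ 2) :=
                mul_le_mul_of_nonneg_left h2 (Real.exp_pos _).le
            _ = Real.exp (-x ^ 2) := by rw [← Real.exp_add]; ring_nf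
      have h := (hmain.add tendsto_erf_atTop).const_mul (-(1 / (2 * a)))
      convert h using 2
      norm_num
    have hint : IntegrableOn (fun x => Real.exp (a ^ 2 - 2 * a * x) * (1 - erf (x - a)))
        (Ioi a) :=
      (intB.integrableOn).congr_fun hcongr measurableSet_Ioi
    rw [integral_Ioi_of_hasDerivAt_of_tendsto hW_cont.continuousWithinAt hderiv hint hlim]
    rw [hW]
    simp only [sub_self, erf_zero]
    ring_nf
  have hIic : ∫ x in Iic a, Real.exp (a ^ 2 - 2 * a * x) * (1 - erf |x - a|)
      = 1 / (2 * a) * (erf a - Real.exp (-a ^ 2)) + 1 / (2 * a) := by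
    have hcongr : ∀ x ∈ Iic a, Real.exp (a ^ 2 - 2 * a * x) * (1 - erf |x - a|)
        = Real.exp (a ^ 2 - 2 * a * x) * (1 - erf (a - x)) := by
      intro x hx
      rw [abs_sub_comm, abs_of_nonneg (by simp at hx; linarith)]
    rw [setIntegral_congr_fun measurableSet_Iic hcongr]
    set V : ℝ → ℝ := fun x =>
      1 / (2 * a) * (erf x - Real.exp (a ^ 2 - 2 * a * x) * (1 - erf (a - x))) with hV
    have hderiv : ∀ x ∈ Iio a,
        HasDerivAt V (Real.exp (a ^ 2 - 2 * a * x) * (1 - erf (a - x))) x := by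
      intro x _
      have h1 := hexp_deriv x
      have hsub : HasDerivAt (fun x : ℝ => a - x) (-1) x := by
        simpa using (hasDerivAt_id x).const_sub a
      have herf1 : HasDerivAt (fun x : ℝ => erf (a - x))
          ((2 / Real.sqrt Real.pi * Real.exp (-(a - x) ^ 2)) * (-1)) x :=
        (erf_hasDerivAt (a - x)).comp x hsub
      have h2 : HasDerivAt (fun x : ℝ => (1 : ℝ) - erf (a - x))
          (-((2 / Real.sqrt Real.pi * Real.exp (-(a - x) ^ 2)) * (-1))) x :=
        herf1.const_sub 1
      have hprod := h1.mul h2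
      have hV' := (((erf_hasDerivAt x).sub hprod).const_mul (1 / (2 * a)))
      refine hV'.congr_deriv ?_
      have hcancel : Real.exp (a ^ 2 - 2 * a * x) * Real.exp (-(a - x) ^ 2)
          = Real.exp (-x ^ 2) := by rw [← Real.exp_add]; ring_nf
      rw [← hcancel]
      field_simp
      nlinarith [hcancel, Real.exp_pos (-x^2), Real.exp_pos (a^2-2*a*x)]
    have hV_cont : Continuous V := by
      apply Continuous.mul continuous_const
      apply Continuous.sub continuous_erf
      exact (by continuity : Continuous fun x : ℝ => Real.exp (a ^ 2 - 2 * a * x)).mul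
        (continuous_const.sub (continuous_erf.comp (by continuity)))
    have hlim : Tendsto V atBot (nhds (-(1 / (2 * a)))) := by
      have hmain : Tendsto (fun x : ℝ => Real.exp (a ^ 2 - 2 * a * x) * (1 - erf (a - x)))
          atBot (nhds 0) := by
        apply squeeze_zero' (Filter.eventually_atBot.mpr ⟨a, fun x hx => ?_⟩)
          (Filter.eventually_atBot.mpr ⟨a, fun x hx => ?_⟩) tendsto_exp_neg_sq_atBot
        · have h1 : erf (a - x) ≤ 1 := erf_le_one _
          exact mul_nonneg (Real.exp_pos _).le (by linarith)
        · have h2 : 1 - erf (a - x) ≤ Real.exp (-(a - x) ^ 2) := erfc_le (by linarith)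
          calc Real.exp (a ^ 2 - 2 * a * x) * (1 - erf (a - x))
              ≤ Real.exp (a ^ 2 - 2 * a * x) * Real.exp (-(a - x) ^ 2) :=
                mul_le_mul_of_nonneg_left h2 (Real.exp_pos _).le
            _ = Real.exp (-x ^ 2) := by rw [← Real.exp_add]; ring_nf
      have h := (tendsto_erf_atBot.sub hmain).const_mul (1 / (2 * a))
      convert h using 2
      norm_num
    have hint : IntegrableOn (fun x => Real.exp (a ^ 2 - 2 * a * x) * (1 - erf (a - x)))
        (Iic a) :=
      (intB.integrableOn).congr_fun hcongr measurableSet_Iic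
    rw [integral_Iic_of_hasDerivAt_of_tendsto hV_cont.continuousWithinAt hderiv hint hlim]
    rw [hV]
    simp only [sub_self, erf_zero]
    ring_nf
  rw [hIoi, hIic]
  field_simp
  ring

lemma planar_integral_gen (c : ℝ) :
    ∫ p : ℝ × ℝ, Real.sqrt (c ^ 2 + (p.1 ^ 2 + p.2 ^ 2)) * Real.exp (-(p.1 ^ 2 + p.2 ^ 2))
      = Real.pi * |c| + Real.pi * Real.sqrt Real.pi / 2 * Real.exp (c ^ 2) * (1 - erf |c|) := by
  have := planar_integral (abs_nonneg c)
  rwa [sq_abs] at this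

lemma sqrt_bound {a x y z : ℝ} (ha : 0 < a) :
    Real.sqrt ((x - a) ^ 2 + (y ^ 2 + z ^ 2)) ≤ |x| + a + |y| + |z| := by
  have hB : (0:ℝ) ≤ |x| + a + |y| + |z| := by positivity
  rw [show |x| + a + |y| + |z| = Real.sqrt ((|x| + a + |y| + |z|) ^ 2) from
    (Real.sqrt_sq hB).symm]
  apply Real.sqrt_le_sqrt
  have h1 : a * (-x) ≤ a * |x| := mul_le_mul_of_nonneg_left (neg_le_abs x) ha.le
  nlinarith [sq_abs x, sq_abs y, sq_abs z, abs_nonneg x, abs_nonneg y, abs_nonneg z,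
    mul_nonneg (abs_nonneg x) (abs_nonneg y), mul_nonneg (abs_nonneg x) (abs_nonneg z),
    mul_nonneg (abs_nonneg y) (abs_nonneg z),
    mul_nonneg ha.le (abs_nonneg y), mul_nonneg ha.le (abs_nonneg z)]

lemma prod_integrable {a : ℝ} (ha : 0 < a) :
    MeasureTheory.Integrable (fun p : ℝ × ℝ × ℝ =>
      Real.sqrt ((p.1 - a) ^ 2 + (p.2.1 ^ 2 + p.2.2 ^ 2)) *
        Real.exp (-(p.1 ^ 2 + (p.2.1 ^ 2 + p.2.2 ^ 2)))) := by
  have e1 : MeasureTheory.Integrable (fun q : ℝ × ℝ => Real.exp (-q.1 ^ 2) * Real.exp (-q.2 ^ 2)) :=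
    gauss_int.mul_prod gauss_int
  have e2 : MeasureTheory.Integrable
      (fun q : ℝ × ℝ => (|q.1| * Real.exp (-q.1 ^ 2)) * Real.exp (-q.2 ^ 2)) :=
    abs_gauss_int.mul_prod gauss_int
  have e3 : MeasureTheory.Integrable
      (fun q : ℝ × ℝ => Real.exp (-q.1 ^ 2) * (|q.2| * Real.exp (-q.2 ^ 2))) :=
    gauss_int.mul_prod abs_gauss_int
  have hxa : MeasureTheory.Integrable (fun x : ℝ => (|x| + a) * Real.exp (-x ^ 2)) := by
    have h := abs_gauss_int.add (gauss_int.const_mul a)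
    refine h.congr (ae_of_all _ fun x => ?_)
    simp only [Pi.add_apply]; ring
  have t1 : MeasureTheory.Integrable (fun p : ℝ × ℝ × ℝ =>
      ((|p.1| + a) * Real.exp (-p.1 ^ 2)) * (Real.exp (-p.2.1 ^ 2) * Real.exp (-p.2.2 ^ 2))) :=
    hxa.mul_prod e1
  have t2 : MeasureTheory.Integrable (fun p : ℝ × ℝ × ℝ =>
      Real.exp (-p.1 ^ 2) * ((|p.2.1| * Real.exp (-p.2.1 ^ 2)) * Real.exp (-p.2.2 ^ 2))) :=
    gauss_int.mul_prod e2
  have t3 : MeasureTheory.Integrable (fun p : ℝ × ℝ × ℝ =>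
      Real.exp (-p.1 ^ 2) * (Real.exp (-p.2.1 ^ 2) * (|p.2.2| * Real.exp (-p.2.2 ^ 2)))) :=
    gauss_int.mul_prod e3
  apply Integrable.mono' ((t1.add t2).add t3)
  · apply Continuous.aestronglyMeasurable
    have c0 : Continuous fun p : ℝ × ℝ × ℝ => p.1 ^ 2 + (p.2.1 ^ 2 + p.2.2 ^ 2) :=
      (continuous_fst.pow 2).add (((continuous_fst.comp continuous_snd).pow 2).add
        ((continuous_snd.comp continuous_snd).pow 2))
    have c1 : Continuous fun p : ℝ × ℝ × ℝ => (p.1 - a) ^ 2 + (p.2.1 ^ 2 + p.2.2 ^ 2) :=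
      ((continuous_fst.sub continuous_const).pow 2).add
        (((continuous_fst.comp continuous_snd).pow 2).add
          ((continuous_snd.comp continuous_snd).pow 2))
    exact (Real.continuous_sqrt.comp c1).mul (Real.continuous_exp.comp c0.neg)
  · apply ae_of_all
    intro p
    rw [Real.norm_eq_abs, abs_of_nonneg (by positivity)]
    have hb := sqrt_bound (x := p.1) (y := p.2.1) (z := p.2.2) ha
    have hsplit : Real.exp (-(p.1 ^ 2 + (p.2.1 ^ 2 + p.2.2 ^ 2)))
        = Real.exp (-p.1 ^ 2) * (Real.exp (-p.2.1 ^ 2) * Real.exp (-p.2.2 ^ 2)) := by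
      rw [← Real.exp_add, ← Real.exp_add]; ring_nf
    simp only [Pi.add_apply]
    rw [hsplit]
    have hE : 0 < Real.exp (-p.1 ^ 2) * (Real.exp (-p.2.1 ^ 2) * Real.exp (-p.2.2 ^ 2)) := by
      positivity
    calc Real.sqrt ((p.1 - a) ^ 2 + (p.2.1 ^ 2 + p.2.2 ^ 2)) *
          (Real.exp (-p.1 ^ 2) * (Real.exp (-p.2.1 ^ 2) * Real.exp (-p.2.2 ^ 2)))
        ≤ (|p.1| + a + |p.2.1| + |p.2.2|) *
          (Real.exp (-p.1 ^ 2) * (Real.exp (-p.2.1 ^ 2) * Real.exp (-p.2.2 ^ 2))) :=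
          mul_le_mul_of_nonneg_right hb hE.le
      _ = ((|p.1| + a) * Real.exp (-p.1 ^ 2)) * (Real.exp (-p.2.1 ^ 2) * Real.exp (-p.2.2 ^ 2))
          + (Real.exp (-p.1 ^ 2) * ((|p.2.1| * Real.exp (-p.2.1 ^ 2)) * Real.exp (-p.2.2 ^ 2))
          + Real.exp (-p.1 ^ 2) * (Real.exp (-p.2.1 ^ 2) * (|p.2.2| * Real.exp (-p.2.2 ^ 2))))
          := by ring
      _ ≤ _ := le_of_eq (by ring)

lemma prod_integral {a : ℝ} (ha : 0 < a) :
    ∫ p : ℝ × ℝ × ℝ, Real.sqrt ((p.1 - a) ^ 2 + (p.2.1 ^ 2 + p.2.2 ^ 2)) *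
        Real.exp (-(p.1 ^ 2 + (p.2.1 ^ 2 + p.2.2 ^ 2)))
      = Real.pi * (Real.exp (-a ^ 2) + Real.sqrt Real.pi * a * erf a)
        + Real.pi * Real.sqrt Real.pi / 2 * (erf a / a) := by
  rw [show (volume : Measure (ℝ × ℝ × ℝ)) = (volume : Measure ℝ).prod (volume : Measure (ℝ × ℝ))
    from rfl] at *
  rw [MeasureTheory.integral_prod _ (by
    have := prod_integrable ha
    rwa [show (volume : Measure (ℝ × ℝ × ℝ)) = (volume : Measure ℝ).prod (volume : Measure (ℝ × ℝ))
      from rfl] at this)]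
  have hinner : ∀ x : ℝ, (∫ q : ℝ × ℝ, Real.sqrt ((x - a) ^ 2 + (q.1 ^ 2 + q.2 ^ 2)) *
        Real.exp (-(x ^ 2 + (q.1 ^ 2 + q.2 ^ 2))))
      = Real.pi * (|x - a| * Real.exp (-x ^ 2))
        + Real.pi * Real.sqrt Real.pi / 2 *
          (Real.exp (a ^ 2 - 2 * a * x) * (1 - erf |x - a|)) := by
    intro x
    have hsplit : ∀ q : ℝ × ℝ, Real.sqrt ((x - a) ^ 2 + (q.1 ^ 2 + q.2 ^ 2)) *
          Real.exp (-(x ^ 2 + (q.1 ^ 2 + q.2 ^ 2)))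
        = Real.exp (-x ^ 2) * (Real.sqrt ((x - a) ^ 2 + (q.1 ^ 2 + q.2 ^ 2)) *
          Real.exp (-(q.1 ^ 2 + q.2 ^ 2))) := by
      intro q
      rw [show Real.exp (-(x ^ 2 + (q.1 ^ 2 + q.2 ^ 2)))
        = Real.exp (-x ^ 2) * Real.exp (-(q.1 ^ 2 + q.2 ^ 2)) by rw [← Real.exp_add]; ring_nf]
      ring
    simp_rw [hsplit]
    rw [MeasureTheory.integral_const_mul, planar_integral_gen (x - a)]
    have hcancel : Real.exp (-x ^ 2) * Real.exp ((x - a) ^ 2) = Real.exp (a ^ 2 - 2 * a * x) := by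
      rw [← Real.exp_add]; ring_nf
    calc Real.exp (-x ^ 2) * (Real.pi * |x - a|
          + Real.pi * Real.sqrt Real.pi / 2 * Real.exp ((x - a) ^ 2) * (1 - erf |x - a|))
        = Real.pi * (|x - a| * Real.exp (-x ^ 2)) + Real.pi * Real.sqrt Real.pi / 2 *
          ((Real.exp (-x ^ 2) * Real.exp ((x - a) ^ 2)) * (1 - erf |x - a|)) := by ring
      _ = _ := by rw [hcancel]
  simp_rw [hinner]
  rw [MeasureTheory.integral_add (((intA1 a).const_mul Real.pi))
    (intB.const_mul (Real.pi * Real.sqrt Real.pi / 2)),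
    MeasureTheory.integral_const_mul, MeasureTheory.integral_const_mul, partA a, partB ha]

lemma euclid_coord (w : Fin 3 → ℝ) (i : Fin 3) :
    (MeasurableEquiv.toLp 2 (Fin 3 → ℝ)).symm.symm w i = w i := rfl

lemma reduce_to_prod (a : ℝ) :
    ∫ q₁ : R3, ‖q₁ - ((a : ℝ) • EuclideanSpace.single (0 : Fin 3) (1:ℝ))‖ *
        Real.exp (-‖q₁‖ ^ 2)
      = ∫ p : ℝ × ℝ × ℝ, Real.sqrt ((p.1 - a) ^ 2 + (p.2.1 ^ 2 + p.2.2 ^ 2)) *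
          Real.exp (-(p.1 ^ 2 + (p.2.1 ^ 2 + p.2.2 ^ 2))) := by
  set v : R3 := (a : ℝ) • EuclideanSpace.single (0 : Fin 3) (1:ℝ) with hv_def
  have hE := (EuclideanSpace.volume_preserving_symm_measurableEquiv_toLp (Fin 3)).symm
  have step2 := hE.integral_comp (MeasurableEquiv.measurableEmbedding _)
    (fun q : R3 => ‖q - v‖ * Real.exp (-‖q‖ ^ 2))
  rw [← step2]
  have hP := (MeasureTheory.volume_preserving_piFinSuccAbove (fun _ : Fin 3 => ℝ) 0).symm
  have step3 := hP.integral_comp (MeasurableEquiv.measurableEmbedding _)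
    (fun w : Fin 3 → ℝ => ‖(MeasurableEquiv.toLp 2 (Fin 3 → ℝ)).symm.symm w - v‖ *
      Real.exp (-‖(MeasurableEquiv.toLp 2 (Fin 3 → ℝ)).symm.symm w‖ ^ 2))
  rw [← step3]
  have hQ := (MeasurePreserving.id (volume : Measure ℝ)).prod
    ((MeasureTheory.volume_preserving_finTwoArrow ℝ).symm)
  have step4 := hQ.integral_comp
    ((MeasurableEquiv.prodCongr (MeasurableEquiv.refl ℝ)
      (MeasurableEquiv.finTwoArrow (α := ℝ)).symm).measurableEmbedding)
    (fun y : ℝ × (Fin 2 → ℝ) =>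
      ‖(MeasurableEquiv.toLp 2 (Fin 3 → ℝ)).symm.symm
          ((MeasurableEquiv.piFinSuccAbove (fun _ : Fin 3 => ℝ) 0).symm y) - v‖ *
        Real.exp (-‖(MeasurableEquiv.toLp 2 (Fin 3 → ℝ)).symm.symm
          ((MeasurableEquiv.piFinSuccAbove (fun _ : Fin 3 => ℝ) 0).symm y)‖ ^ 2))
  refine Eq.trans step4.symm ?_
  have hfun : ∀ p : ℝ × ℝ × ℝ,
      ‖(MeasurableEquiv.toLp 2 (Fin 3 → ℝ)).symm.symm
          ((MeasurableEquiv.piFinSuccAbove (fun _ : Fin 3 => ℝ) 0).symm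
            (Prod.map id (⇑(MeasurableEquiv.finTwoArrow (α := ℝ)).symm) p)) - v‖ *
        Real.exp (-‖(MeasurableEquiv.toLp 2 (Fin 3 → ℝ)).symm.symm
          ((MeasurableEquiv.piFinSuccAbove (fun _ : Fin 3 => ℝ) 0).symm
            (Prod.map id (⇑(MeasurableEquiv.finTwoArrow (α := ℝ)).symm) p))‖ ^ 2)
      = Real.sqrt ((p.1 - a) ^ 2 + (p.2.1 ^ 2 + p.2.2 ^ 2)) *
          Real.exp (-(p.1 ^ 2 + (p.2.1 ^ 2 + p.2.2 ^ 2))) := by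
    intro p
    have hw : ((MeasurableEquiv.piFinSuccAbove (fun _ : Fin 3 => ℝ) 0).symm
        (Prod.map id (⇑(MeasurableEquiv.finTwoArrow (α := ℝ)).symm) p))
        = ![p.1, p.2.1, p.2.2] := by
      funext i
      fin_cases i <;> rfl
    rw [hw]
    have hn1 : ‖(MeasurableEquiv.toLp 2 (Fin 3 → ℝ)).symm.symm ![p.1, p.2.1, p.2.2] - v‖
        = Real.sqrt ((p.1 - a) ^ 2 + (p.2.1 ^ 2 + p.2.2 ^ 2)) := by
      rw [EuclideanSpace.norm_eq]
      congr 1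
      rw [Fin.sum_univ_three]
      simp [hv_def, EuclideanSpace.single_apply, PiLp.sub_apply, PiLp.smul_apply,
        Real.norm_eq_abs, sq_abs, euclid_coord]
      ring
    have hn2 : ‖(MeasurableEquiv.toLp 2 (Fin 3 → ℝ)).symm.symm ![p.1, p.2.1, p.2.2]‖ ^ 2
        = p.1 ^ 2 + (p.2.1 ^ 2 + p.2.2 ^ 2) := by
      rw [EuclideanSpace.norm_eq, Real.sq_sqrt (by positivity), Fin.sum_univ_three]
      simp [Real.norm_eq_abs, sq_abs, euclid_coord]
      ring
    rw [hn1, hn2]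
  calc ∫ p : ℝ × ℝ × ℝ, _ ∂((volume : Measure ℝ).prod ((volume : Measure ℝ).prod volume))
      = ∫ p : ℝ × ℝ × ℝ, Real.sqrt ((p.1 - a) ^ 2 + (p.2.1 ^ 2 + p.2.2 ^ 2)) *
          Real.exp (-(p.1 ^ 2 + (p.2.1 ^ 2 + p.2.2 ^ 2)))
            ∂((volume : Measure ℝ).prod ((volume : Measure ℝ).prod volume)) := by
        simp_rw [hfun]
    _ = ∫ p : ℝ × ℝ × ℝ, Real.sqrt ((p.1 - a) ^ 2 + (p.2.1 ^ 2 + p.2.2 ^ 2)) *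
          Real.exp (-(p.1 ^ 2 + (p.2.1 ^ 2 + p.2.2 ^ 2))) := rfl

/-- For `q₂ ≠ 0`,
`∫_{ℝ³} |q₁ − q₂|·exp(−|q₁|²) dq₁
  = (π^{3/2}/(2|q₂|))·erf(|q₂|)·(1 + 2|q₂|²) + π·exp(−|q₂|²)`. -/
theorem purity_stmt10 (q₂ : R3) (hq₂ : q₂ ≠ 0) :
    ∫ q₁ : R3, ‖q₁ - q₂‖ * Real.exp (-‖q₁‖ ^ 2)
      = (Real.pi ^ ((3 : ℝ) / 2) / (2 * ‖q₂‖)) * erf ‖q₂‖ * (1 + 2 * ‖q₂‖ ^ 2) +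
          Real.pi * Real.exp (-‖q₂‖ ^ 2) := by
  have ha : 0 < ‖q₂‖ := norm_pos_iff.mpr hq₂
  set a := ‖q₂‖ with ha_def
  set v : R3 := (a : ℝ) • EuclideanSpace.single (0 : Fin 3) (1:ℝ) with hv_def
  have hnv : ‖v‖ = ‖q₂‖ := by
    rw [hv_def, norm_smul, EuclideanSpace.norm_single]
    simp [Real.norm_eq_abs, abs_of_pos ha]
    exact ha_def
  have step1 : (∫ q₁ : R3, ‖q₁ - q₂‖ * Real.exp (-‖q₁‖ ^ 2))
      = ∫ q₁ : R3, ‖q₁ - v‖ * Real.exp (-‖q₁‖ ^ 2) := by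
    set T := Submodule.reflection (ℝ ∙ (v - q₂))ᗮ with hT_def
    have hTv : T v = q₂ := Submodule.reflection_sub hnv
    have hmp := T.measurePreserving
    have hcomp := hmp.integral_comp (T.toHomeomorph.toMeasurableEquiv.measurableEmbedding)
      (fun q : R3 => ‖q - q₂‖ * Real.exp (-‖q‖ ^ 2))
    rw [← hcomp]
    congr 1
    funext q
    have h1 : T q - q₂ = T (q - v) := by rw [map_sub, hTv]
    calc ‖T q - q₂‖ * Real.exp (-‖T q‖ ^ 2)
        = ‖T (q - v)‖ * Real.exp (-‖T q‖ ^ 2) := by rw [h1]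
      _ = ‖q - v‖ * Real.exp (-‖q‖ ^ 2) := by rw [T.norm_map, T.norm_map]
  rw [step1, reduce_to_prod a, prod_integral ha]
  have hrpow : Real.pi ^ ((3:ℝ)/2) = Real.pi * Real.sqrt Real.pi := by
    rw [show (3:ℝ)/2 = 1 + 1/2 by norm_num, Real.rpow_add Real.pi_pos, Real.rpow_one,
      Real.sqrt_eq_rpow]
  rw [hrpow]
  have hane : a ≠ 0 := ne_of_gt ha
  field_simp
  ring
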